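/- arXiv:2011.09176 — 2 statements merged into one kernel-verified Lean document; each statement's English description precedes it below -/
import Mathlib

section
/- Let q1 be a UCQ with disjuncts q_{1,1},...,q_{1,k} and q2 a UCQ with disjuncts q_{2,1},...,q_{2,m}, all over the same schema S and of the same arity. Then q1 is contained in q2 if and only if for every disjunct q_{1,i} there is a disjunct q_{2,j} such that there is a homomorphism from q_{2,j} to q_{1,i}. -/
/-- A relational schema: a collection of relation names with arities. -/
structure Schema : Type 1 where
  Rel : Type
  arity : Rel → ℕ

/-- A fact over schema `S` with constants from `C`. -/
def Fct (S : Schema) (C : Type) : Type := (R : S.Rel) × (Fin (S.arity R) → C)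

/-- Apply a function on constants to a fact. -/
def mapFct {S : Schema} {C D : Type} (h : C → D) (f : Fct S C) : Fct S D :=
  ⟨f.1, h ∘ f.2⟩

/-- A database over schema `S` with constants from `C`: a set of facts. -/
abbrev DB (S : Schema) (C : Type) : Type := Set (Fct S C)

/-- A conjunctive query over schema `S` with `n` answer variables. -/
structure CQ (S : Schema) (n : ℕ) : Type 1 where
  V : Type
  ansVar : Fin n → V
  atoms : DB S V

/-- `t` is an answer to the CQ `q` on the database `D`. -/
def cqAns {S : Schema} {n : ℕ} (q : CQ S n) {C : Type} (D : DB S C) (t : Fin n → C) : Prop :=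
  ∃ h : q.V → C, (∀ a ∈ q.atoms, mapFct h a ∈ D) ∧ h ∘ q.ansVar = t

/-- A (possibly infinitary) union of conjunctive queries. -/
abbrev UCQ (S : Schema) (n : ℕ) : Type 1 := Set (CQ S n)

/-- `t` is an answer to the UCQ `q` on the database `D`. -/
def ucqAns {S : Schema} {n : ℕ} (q : UCQ S n) {C : Type} (D : DB S C) (t : Fin n → C) : Prop :=
  ∃ p ∈ q, cqAns p D t

/-- Containment of UCQs over all databases of the schema. -/
def Contained {S : Schema} {n : ℕ} (q1 q2 : UCQ S n) : Prop :=
  ∀ (C : Type) (D : DB S C) (t : Fin n → C), ucqAns q1 D t → ucqAns q2 D t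

/-- A homomorphism from the CQ `q` to the CQ `p` (preserving atoms and answer variables). -/
def CQHom {S : Schema} {n : ℕ} (q p : CQ S n) : Prop :=
  ∃ h : q.V → p.V, (∀ a ∈ q.atoms, mapFct h a ∈ p.atoms) ∧ h ∘ q.ansVar = p.ansVar

/-! The atoms of a CQ `p`, read as a database, have the answer variables of `p` as an answer to
`p` itself (through the identity), and a homomorphism into `p` is precisely a witness that some
other CQ has that same answer there. Hence containment, tested on these canonical databases,
yields the homomorphisms; conversely a homomorphism `p₂ → p₁` composed with a match of `p₁`
is a match of `p₂`. -/

section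

variable {S : Schema} {n : ℕ}

theorem cqHom_iff_cqAns {q p : CQ S n} : CQHom q p ↔ cqAns q p.atoms p.ansVar :=
  Iff.rfl

theorem cqAns_atoms_ansVar (p : CQ S n) : cqAns p p.atoms p.ansVar :=
  ⟨id, fun _ ha => ha, rfl⟩

theorem CQHom.cqAns {q p : CQ S n} (hqp : CQHom q p) {C : Type} {D : DB S C} {t : Fin n → C}
    (hp : cqAns p D t) : cqAns q D t := by
  obtain ⟨h, h_atoms, h_ans⟩ := hqp
  obtain ⟨g, g_atoms, g_ans⟩ := hp
  exact ⟨g ∘ h, fun a ha => g_atoms _ (h_atoms a ha), by rw [Function.comp_assoc, h_ans, g_ans]⟩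

theorem contained_iff_forall_exists_cqHom {q₁ q₂ : UCQ S n} :
    Contained q₁ q₂ ↔ ∀ p₁ ∈ q₁, ∃ p₂ ∈ q₂, CQHom p₂ p₁ := by
  constructor
  · intro hcont p₁ hp₁
    obtain ⟨p₂, hp₂, hans⟩ := hcont _ p₁.atoms p₁.ansVar ⟨p₁, hp₁, cqAns_atoms_ansVar p₁⟩
    exact ⟨p₂, hp₂, cqHom_iff_cqAns.2 hans⟩
  · rintro hhom C D t ⟨p₁, hp₁, hans⟩
    obtain ⟨p₂, hp₂, hp₂p₁⟩ := hhom p₁ hp₁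
    exact ⟨p₂, hp₂, hp₂p₁.cqAns hans⟩

end

theorem ucq_containment_iff_hom (S : Schema) (n : ℕ) (q1 q2 : List (CQ S n)) :
    (∀ (C : Type) (D : DB S C) (t : Fin n → C),
        (∃ p ∈ q1, cqAns p D t) → ∃ p ∈ q2, cqAns p D t) ↔
      ∀ p1 ∈ q1, ∃ p2 ∈ q2, CQHom p2 p1 :=
  contained_iff_forall_exists_cqHom (q₁ := {p | p ∈ q1}) (q₂ := {p | p ∈ q2})
end

section
/- Let Q=(O,T,q) be an ontology-mediated query with O formulated in first-order logic with equality and q a UCQ. If Q has a UCQ rewriting q_r in which every CQ disjunct has size at most n, then the canonical UCQ rewriting of size n — namely, the UCQ consisting of all pairs (A,a) viewed as CQs, where A is a T-ABox of size at most n and a is a certain answer to Q on A — is also a rewriting of Q. -/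
/-- An ontology over schema `T`, taken semantically: the class of its models, i.e.
a class of (possibly infinite) `T`-databases over arbitrary domains. -/
def Ontology (T : Schema) : Type 1 := (C : Type) → DB T C → Prop

/-- `t` is a certain answer to the OMQ `(O, T, q)` on the ABox `A`: in every model of
`A` and `O` (an interpretation into which `A` maps homomorphically via the
interpretation `ι` of its constants), `ι ∘ t` is an answer to `q`. -/
def certAns {T : Schema} {n : ℕ} (O : Ontology T) (q : UCQ T n) {C : Type}
    (A : DB T C) (t : Fin n → C) : Prop :=
  ∀ (E : Type) (I : DB T E) (ι : C → E),
    (∀ f ∈ A, mapFct ι f ∈ I) → O E I → ucqAns q I (ι ∘ t)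

/-- `qr` is a (possibly infinitary) UCQ rewriting of the OMQ `(O, T, q)`: on every
ABox, the answers to `qr` coincide with the certain answers of the OMQ. -/
def IsRewriting {T : Schema} {n : ℕ} (O : Ontology T) (q qr : UCQ T n) : Prop :=
  ∀ (C : Type) (A : DB T C) (t : Fin n → C), ucqAns qr A t ↔ certAns O q A t

/-- The canonical UCQ rewriting of size `n` of the OMQ `(O, T, q)`: all pairs `(A, a)`
viewed as CQs, where `A` is a `T`-ABox with at most `n` facts and `a` is a certain
answer to the OMQ on `A`. (Every CQ is of the form `(A, a)` for `A` its set of atoms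
viewed as an ABox and `a` its tuple of answer variables.) -/
def canonRewriting {T : Schema} {k : ℕ} (O : Ontology T) (q : UCQ T k) (n : ℕ) : UCQ T k :=
  { p | p.atoms.Finite ∧ p.atoms.ncard ≤ n ∧ certAns O q p.atoms p.ansVar }

/-! Certain answers are preserved along homomorphisms of ABoxes, so every disjunct `(A, a)` of the
canonical rewriting is sound: a match of it in an ABox transports the certainty of `a` on `A`.
Conversely, a disjunct `p` of the given rewriting `qr` matches its own canonical ABox, so its answer
tuple is a certain answer there; being small, `p` is itself a disjunct of the canonical rewriting,
which therefore answers everything `qr` answers. -/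

section

variable {T : Schema} {k : ℕ} {O : Ontology T} {q : UCQ T k}

theorem cqAns_self (p : CQ T k) : cqAns p p.atoms p.ansVar :=
  ⟨id, fun _ ha => ha, rfl⟩

theorem certAns.comp {C D : Type} {A : DB T C} {B : DB T D} {t : Fin k → C} (h : C → D)
    (hAB : ∀ f ∈ A, mapFct h f ∈ B) (ht : certAns O q A t) : certAns O q B (h ∘ t) :=
  fun E I ι hBI hO => ht E I (ι ∘ h) (fun f hf => hBI _ (hAB f hf)) hO

theorem certAns_of_cqAns {p : CQ T k} {C : Type} {A : DB T C} {t : Fin k → C}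
    (hp : certAns O q p.atoms p.ansVar) (hpA : cqAns p A t) : certAns O q A t := by
  obtain ⟨h, hatoms, rfl⟩ := hpA
  exact hp.comp h hatoms

theorem IsRewriting.certAns_self {qr : UCQ T k} (hqr : IsRewriting O q qr) {p : CQ T k}
    (hp : p ∈ qr) : certAns O q p.atoms p.ansVar :=
  (hqr p.V p.atoms p.ansVar).mp ⟨p, hp, cqAns_self p⟩

end

theorem canonical_rewriting_of_bounded_size (T : Schema) (k : ℕ) (O : Ontology T)
    (q : UCQ T k) (n : ℕ) (qr : UCQ T k) (hqr : IsRewriting O q qr)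
    (hsize : ∀ p ∈ qr, p.atoms.Finite ∧ p.atoms.ncard ≤ n) :
    IsRewriting O q (canonRewriting O q n) := by
  intro C A t
  constructor
  · rintro ⟨p, ⟨-, -, hp⟩, hpA⟩
    exact certAns_of_cqAns hp hpA
  · intro ht
    obtain ⟨p, hp, hpA⟩ := (hqr C A t).mpr ht
    exact ⟨p, ⟨(hsize p hp).1, (hsize p hp).2, hqr.certAns_self hp⟩, hpA⟩
end
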